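/- Let c ∈ ℝ, b > 0, Θ > 0 and let J, J⁽¹⁾, J⁽²⁾ be standard Gaussian N(0,1) random variables, J⁽¹⁾ and J⁽²⁾ independent. Define F(c,b,Θ) := (1 + erf((Θb² + c)/(b√2)))/(1 + erf((Θb² − c)/(b√2))). Then: (i) E[sign(c+bJ) e^{Θ|c+bJ|}]/E[e^{Θ|c+bJ|}] = 1 − 2/(1 + e^{2Θc} F(c,b,Θ)). (ii) Consequently, for m̄ ∈ ℝ, γ > 0, integer P ≥ 2 and Δq̄ > 0, setting A₁ := (P/2)m̄^{P−1}, A₂ := √(γP/2), A₃ := √(γP(P−1)Δq̄/2) and G := A₁ + A₂J⁽¹⁾ + A₃J⁽²⁾, the zero-temperature 1-RSB self-consistency equations take the form E₁[E₂[sign(G)e^{Θ|G|}]/E₂[e^{Θ|G|}]] = 1 − 2E₁[1/(1 + e^{2Θ(A₁+A₂J⁽¹⁾)} F(A₁+A₂J⁽¹⁾, A₃, Θ))] and 1 − E₁[(E₂[sign(G)e^{Θ|G|}]/E₂[e^{Θ|G|}])²] = 4E₁[ e^{2Θ(A₁+A₂J⁽¹⁾)} F(A₁+A₂J⁽¹⁾,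 A₃, Θ) / (1 + e^{2Θ(A₁+A₂J⁽¹⁾)} F(A₁+A₂J⁽¹⁾, A₃, Θ))² ], where E₂, E₁ denote expectations over J⁽²⁾ and J⁽¹⁾ respectively. -/

import Mathlib

open MeasureTheory ProbabilityTheory Real Filter

/-- Expectation of `f J` for a standard Gaussian `J ~ N(0,1)`. -/
noncomputable def gExp (f : ℝ → ℝ) : ℝ := ∫ y, f y ∂(gaussianReal 0 1)

/-- Sign function: 1 for positive, -1 for negative arguments. -/
noncomputable def sgn (u : ℝ) : ℝ := if 0 < u then 1 else if u < 0 then -1 else 0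

/-- The error function. -/
noncomputable def erf (u : ℝ) : ℝ := (2 / Real.sqrt π) * ∫ t in (0:ℝ)..u, Real.exp (-t^2)

/-- The function F(c,b,Θ) appearing in the zero-temperature 1-RSB equations. -/
noncomputable def Ffun (c b Θ : ℝ) : ℝ :=
  (1 + erf ((Θ * b^2 + c) / (b * Real.sqrt 2))) / (1 + erf ((Θ * b^2 - c) / (b * Real.sqrt 2)))


open Set
open scoped NNReal ENNReal


lemma erf_continuous : Continuous erf := by
  apply continuous_const.mul
  exact intervalIntegral.continuous_primitive
    (fun a b => ((continuous_exp.comp (by continuity)).intervalIntegrable a b)) 0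

lemma erf_neg (u : ℝ) : erf (-u) = - erf u := by
  unfold erf
  rw [← mul_neg]
  congr 1
  have h1 : ∫ t in (0:ℝ)..(-u), Real.exp (-t^2)
      = ∫ t in (0:ℝ)..(-u), (fun s => Real.exp (-s^2)) (-t) := by
    simp [neg_sq]
  rw [h1, intervalIntegral.integral_comp_neg (fun s => Real.exp (-s^2)), neg_neg, neg_zero,
    intervalIntegral.integral_symm]

lemma integral_split (μ' : Measure ℝ) (f : ℝ → ℝ) (hf : Integrable f μ') (s : ℝ) :
    ∫ x, f x ∂μ' = (∫ x in Iic s, f x ∂μ') + ∫ x in Ioi s, f x ∂μ' := by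
  rw [← setIntegral_univ (μ := μ') (f := f), ← Iic_union_Ioi (a := s),
    setIntegral_union (Iic_disjoint_Ioi le_rfl) measurableSet_Ioi
      hf.integrableOn hf.integrableOn]

lemma integrable_exp_neg_sq : Integrable (fun x : ℝ => Real.exp (-x^2)) := by
  simpa using integrable_exp_neg_mul_sq (by norm_num : (0:ℝ) < 1)

lemma integral_exp_neg_sq_Ioi (a : ℝ) :
    ∫ x in Ioi a, Real.exp (-x^2) = Real.sqrt π / 2 * (1 - erf a) := by
  have htot : ∫ x : ℝ, Real.exp (-x^2) = Real.sqrt π := by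
    simpa using integral_gaussian 1
  have hIoi0 : ∫ x in Ioi (0:ℝ), Real.exp (-x^2) = Real.sqrt π / 2 := by
    simpa using integral_gaussian_Ioi 1
  have hIic0 : ∫ x in Iic (0:ℝ), Real.exp (-x^2) = Real.sqrt π / 2 := by
    have := integral_split volume _ integrable_exp_neg_sq 0
    rw [htot, hIoi0] at this; linarith
  have hsplit := integral_split volume _ integrable_exp_neg_sq a
  have hIic : ∫ x in Iic a, Real.exp (-x^2)
      = Real.sqrt π / 2 + ∫ t in (0:ℝ)..a, Real.exp (-t^2) := by
    have := intervalIntegral.integral_Iic_sub_Iic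
      (integrable_exp_neg_sq.integrableOn (s := Iic 0))
      (integrable_exp_neg_sq.integrableOn (s := Iic a)) (a := 0) (b := a)
    rw [hIic0] at this; linarith
  have herf : ∫ t in (0:ℝ)..a, Real.exp (-t^2) = Real.sqrt π / 2 * erf a := by
    have hpi : Real.sqrt π ≠ 0 := by positivity
    unfold erf; field_simp
  rw [htot, hIic, herf] at hsplit
  linarith

lemma erf_lt_one (a : ℝ) : erf a < 1 := by
  have h1 : 0 < ∫ x in Ioi a, Real.exp (-x^2) := by
    refine setIntegral_pos_iff_support_of_nonneg_ae ?_ ?_ |>.2 ?_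
    · exact ae_of_all _ fun x => (Real.exp_pos _).le
    · exact integrable_exp_neg_sq.integrableOn
    · have : (Function.support fun x : ℝ => Real.exp (-x^2)) = univ := by
        ext x; simp [Function.support, (Real.exp_pos _).ne']
      rw [this, univ_inter]
      simp
  rw [integral_exp_neg_sq_Ioi] at h1
  nlinarith [Real.sqrt_pos.2 Real.pi_pos]

lemma neg_one_lt_erf (a : ℝ) : -1 < erf a := by
  have := erf_lt_one (-a); rw [erf_neg] at this; linarith

lemma one_add_erf_pos (a : ℝ) : 0 < 1 + erf a := by linarith [neg_one_lt_erf a]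

lemma gauss_setInt (g : ℝ → ℝ) {s : Set ℝ} (hs : MeasurableSet s) :
    ∫ x in s, g x ∂(gaussianReal 0 1)
      = ∫ x in s, (Real.sqrt (2 * π))⁻¹ * Real.exp (-x^2/2) * g x := by
  rw [gaussianReal_of_var_ne_zero _ one_ne_zero]
  have hpdf : gaussianPDF 0 1 = fun x => ((Real.toNNReal (gaussianPDFReal 0 1 x) : ℝ≥0) : ℝ≥0∞) := by
    rfl
  rw [hpdf, setIntegral_withDensity_eq_setIntegral_smul
    ((measurable_gaussianPDFReal 0 1).real_toNNReal) g hs]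
  apply setIntegral_congr_fun hs
  intro x _
  show (gaussianPDFReal 0 1 x).toNNReal • g x = _
  rw [NNReal.smul_def, Real.coe_toNNReal _ (gaussianPDFReal_nonneg 0 1 x)]
  simp only [gaussianPDFReal]
  norm_num

lemma gauss_int (g : ℝ → ℝ) :
    ∫ x, g x ∂(gaussianReal 0 1)
      = ∫ x, (Real.sqrt (2 * π))⁻¹ * Real.exp (-x^2/2) * g x := by
  have := gauss_setInt g MeasurableSet.univ
  simpa using this

lemma shift_Ioi (h : ℝ → ℝ) (s μ : ℝ) :
    ∫ x in Ioi s, h (x - μ) = ∫ x in Ioi (s - μ), h x := by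
  rw [← integral_indicator measurableSet_Ioi, ← integral_indicator measurableSet_Ioi]
  rw [← integral_sub_right_eq_self (fun x => (Ioi (s - μ)).indicator h x) μ]
  congr 1
  ext x
  simp only [indicator_apply, mem_Ioi, sub_lt_sub_iff_right]

lemma integral_exp_neg_half_sq_Ioi (r : ℝ) :
    ∫ x in Ioi r, Real.exp (-x^2/2)
      = Real.sqrt 2 * (Real.sqrt π / 2 * (1 - erf (r / Real.sqrt 2))) := by
  have h2 : (0:ℝ) < Real.sqrt 2 := by positivity
  have := integral_comp_mul_left_Ioi (fun x => Real.exp (-x^2/2)) (r / Real.sqrt 2) h2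
  rw [mul_div_cancel₀ _ h2.ne'] at this
  have heq : ∀ x : ℝ, Real.exp (-(Real.sqrt 2 * x)^2/2) = Real.exp (-x^2) := by
    intro x
    congr 1
    rw [mul_pow, Real.sq_sqrt (by norm_num : (0:ℝ) ≤ 2)]
    ring
  simp_rw [heq] at this
  rw [integral_exp_neg_sq_Ioi] at this
  rw [this, smul_eq_mul]
  field_simp

lemma exp_sq_split (μ x : ℝ) :
    (Real.sqrt (2 * π))⁻¹ * Real.exp (-x^2/2) * Real.exp (μ * x)
      = (Real.sqrt (2 * π))⁻¹ * Real.exp (μ^2/2) * Real.exp (-(x - μ)^2/2) := by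
  rw [mul_assoc, mul_assoc, ← Real.exp_add, ← Real.exp_add]
  congr 2
  ring

lemma tail_Ioi (μ s : ℝ) :
    ∫ x in Ioi s, Real.exp (μ * x) ∂(gaussianReal 0 1)
      = Real.exp (μ^2/2) * (1 + erf ((μ - s) / Real.sqrt 2)) / 2 := by
  rw [gauss_setInt _ measurableSet_Ioi]
  simp_rw [exp_sq_split μ]
  rw [integral_const_mul]
  rw [show (fun x => Real.exp (-(x - μ)^2/2)) = fun x => (fun y => Real.exp (-y^2/2)) (x - μ) from rfl]
  rw [shift_Ioi (fun y => Real.exp (-y^2/2)) s μ, integral_exp_neg_half_sq_Ioi]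
  have h1 : (s - μ) / Real.sqrt 2 = -((μ - s) / Real.sqrt 2) := by ring
  rw [h1, erf_neg]
  rw [Real.sqrt_mul (by norm_num : (0:ℝ) ≤ 2) π]
  have h2 : (0:ℝ) < Real.sqrt 2 := by positivity
  have h3 : (0:ℝ) < Real.sqrt π := Real.sqrt_pos.2 Real.pi_pos
  field_simp
  ring

lemma integrable_exp_gauss (μ : ℝ) :
    Integrable (fun x => Real.exp (μ * x)) (gaussianReal 0 1) := by
  rw [gaussianReal_of_var_ne_zero _ one_ne_zero]
  have hpdf : gaussianPDF 0 1 = fun x => ((Real.toNNReal (gaussianPDFReal 0 1 x) : ℝ≥0) : ℝ≥0∞) :=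
    rfl
  rw [hpdf, integrable_withDensity_iff_integrable_smul
    ((measurable_gaussianPDFReal 0 1).real_toNNReal)]
  have : (fun x => (gaussianPDFReal 0 1 x).toNNReal • Real.exp (μ * x))
      = fun x => ((Real.sqrt (2 * π))⁻¹ * Real.exp (μ^2/2)) * Real.exp (-(x - μ)^2/2) := by
    funext x
    rw [NNReal.smul_def, Real.coe_toNNReal _ (gaussianPDFReal_nonneg 0 1 x)]
    simp only [gaussianPDFReal, NNReal.coe_one, mul_one, sub_zero]
    exact exp_sq_split μ x
  rw [this]
  apply Integrable.const_mul
  have hbase : Integrable (fun x : ℝ => Real.exp (-(1/2 : ℝ) * x^2)) :=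
    integrable_exp_neg_mul_sq (by norm_num)
  have := hbase.comp_sub_right μ
  simpa [neg_div, mul_comm, mul_div_assoc, neg_mul, div_eq_mul_inv, mul_comm (2:ℝ)⁻¹] using this

lemma total_exp_gauss (μ : ℝ) :
    ∫ x, Real.exp (μ * x) ∂(gaussianReal 0 1) = Real.exp (μ^2/2) := by
  rw [gauss_int]
  simp_rw [exp_sq_split μ]
  rw [integral_const_mul]
  rw [show (fun x => Real.exp (-(x - μ)^2/2)) = fun x => (fun y => Real.exp (-y^2/2)) (x - μ) from rfl]
  rw [integral_sub_right_eq_self (fun y => Real.exp (-y^2/2)) μ]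
  have : ∫ y : ℝ, Real.exp (-y^2/2) = Real.sqrt (2 * π) := by
    have := integral_gaussian (1/2 : ℝ)
    rw [show π / (1/2 : ℝ) = 2 * π by ring] at this
    rw [← this]
    congr 1; funext y; congr 1; ring
  rw [this]
  have h2 : (0:ℝ) < Real.sqrt (2 * π) := Real.sqrt_pos.2 (by positivity)
  field_simp

lemma tail_Iic (μ s : ℝ) :
    ∫ x in Iic s, Real.exp (μ * x) ∂(gaussianReal 0 1)
      = Real.exp (μ^2/2) * (1 + erf ((s - μ) / Real.sqrt 2)) / 2 := by
  have h := integral_split (gaussianReal 0 1) _ (integrable_exp_gauss μ) s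
  rw [total_exp_gauss, tail_Ioi] at h
  have h1 : (s - μ) / Real.sqrt 2 = -((μ - s) / Real.sqrt 2) := by ring
  rw [h1, erf_neg]
  linarith

lemma Ffun_pos (c b Θ : ℝ) : 0 < Ffun c b Θ :=
  div_pos (one_add_erf_pos _) (one_add_erf_pos _)

lemma alg_i (q K p m : ℝ) (hq : 0 < q) (hK : 0 < K) (hp : 0 < p) (hm : 0 < m) :
    (q*K*p/2 - q⁻¹*K*m/2) / (q*K*p/2 + q⁻¹*K*m/2) = 1 - 2 / (1 + q*q*(p/m)) := by
  have hD : q*K*p/2 + q⁻¹*K*m/2 > 0 := by positivity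
  have hE : 1 + q*q*(p/m) > 0 := by positivity
  field_simp
  ring

theorem part_i (c b Θ : ℝ) (hb : 0 < b) :
    gExp (fun J => sgn (c + b * J) * Real.exp (Θ * |c + b * J|))
        / gExp (fun J => Real.exp (Θ * |c + b * J|))
      = 1 - 2 / (1 + Real.exp (2 * Θ * c) * Ffun c b Θ) := by
  set s : ℝ := -c/b with hs
  have hbs : b * s = -c := by rw [hs]; field_simp
  set u : ℝ → ℝ := fun x => Real.exp (Θ*c) * Real.exp ((Θ*b) * x) with hu
  set v : ℝ → ℝ := fun x => Real.exp (-(Θ*c)) * Real.exp ((-(Θ*b)) * x) with hv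
  have hpos : ∀ x, s < x → 0 < c + b * x := by
    intro x hx
    have := mul_lt_mul_of_pos_left hx hb
    rw [hbs] at this; linarith
  have hneg : ∀ x, x < s → c + b * x < 0 := by
    intro x hx
    have := mul_lt_mul_of_pos_left hx hb
    rw [hbs] at this; linarith
  have huval : ∀ x, s < x → Real.exp (Θ * |c + b * x|) = u x := by
    intro x hx
    rw [abs_of_pos (hpos x hx)]
    show _ = Real.exp (Θ*c) * Real.exp ((Θ*b) * x)
    rw [← Real.exp_add]; congr 1; ring
  have hvval : ∀ x, x < s → Real.exp (Θ * |c + b * x|) = v x := by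
    intro x hx
    rw [abs_of_neg (hneg x hx)]
    show _ = Real.exp (-(Θ*c)) * Real.exp ((-(Θ*b)) * x)
    rw [← Real.exp_add]; congr 1; ring
  have hne : ∀ᵐ x ∂(gaussianReal 0 1), x ≠ s := by
    rw [ae_iff]
    have h0 : (gaussianReal 0 1) {s} = 0 :=
      gaussianReal_absolutelyContinuous 0 one_ne_zero (measure_singleton s)
    simpa using h0
  have hIu : Integrable ((Ioi s).indicator u) (gaussianReal 0 1) :=
    (((integrable_exp_gauss (Θ*b)).const_mul _).indicator measurableSet_Ioi)
  have hIv : Integrable ((Iic s).indicator v) (gaussianReal 0 1) :=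
    (((integrable_exp_gauss (-(Θ*b))).const_mul _).indicator measurableSet_Iic)
  have hNum : gExp (fun J => sgn (c + b * J) * Real.exp (Θ * |c + b * J|))
      = (∫ x in Ioi s, u x ∂(gaussianReal 0 1)) - ∫ x in Iic s, v x ∂(gaussianReal 0 1) := by
    rw [gExp]
    rw [integral_congr_ae (g := fun x => (Ioi s).indicator u x - (Iic s).indicator v x) ?_]
    · rw [integral_sub hIu hIv, integral_indicator measurableSet_Ioi,
        integral_indicator measurableSet_Iic]
    · filter_upwards [hne] with x hx
      rcases lt_trichotomy x s with h | h | h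
      · rw [indicator_of_notMem (by simp [not_lt, h.le] : x ∉ Ioi s),
          indicator_of_mem (mem_Iic.2 h.le), hvval x h]
        have : sgn (c + b * x) = -1 := by simp [sgn, hneg x h, not_lt.2 (hneg x h).le]
        rw [this]; ring
      · exact absurd h hx
      · rw [indicator_of_mem (mem_Ioi.2 h), indicator_of_notMem (by simp [not_le, h] : x ∉ Iic s),
          huval x h]
        have : sgn (c + b * x) = 1 := by simp [sgn, hpos x h]
        rw [this]; ring
  have hDen : gExp (fun J => Real.exp (Θ * |c + b * J|))
      = (∫ x in Ioi s, u x ∂(gaussianReal 0 1)) + ∫ x in Iic s, v x ∂(gaussianReal 0 1) := by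
    rw [gExp]
    rw [integral_congr_ae (g := fun x => (Ioi s).indicator u x + (Iic s).indicator v x) ?_]
    · rw [integral_add hIu hIv, integral_indicator measurableSet_Ioi,
        integral_indicator measurableSet_Iic]
    · filter_upwards [hne] with x hx
      rcases lt_trichotomy x s with h | h | h
      · rw [indicator_of_notMem (by simp [not_lt, h.le] : x ∉ Ioi s),
          indicator_of_mem (mem_Iic.2 h.le), hvval x h]
        ring
      · exact absurd h hx
      · rw [indicator_of_mem (mem_Ioi.2 h), indicator_of_notMem (by simp [not_le, h] : x ∉ Iic s),
          huval x h]
        ring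
  have hUint : ∫ x in Ioi s, u x ∂(gaussianReal 0 1)
      = Real.exp (Θ*c) * (Real.exp ((Θ*b)^2/2)
          * (1 + erf ((Θ * b^2 + c) / (b * Real.sqrt 2))) / 2) := by
    rw [hu]
    rw [integral_const_mul, tail_Ioi]
    have e1 : (Θ*b - s)/Real.sqrt 2 = (Θ * b^2 + c) / (b * Real.sqrt 2) := by
      have h2 : Real.sqrt 2 ≠ 0 := by positivity
      field_simp [hs]
      linear_combination (-1:ℝ) * hbs
    rw [e1]
  have hVint : ∫ x in Iic s, v x ∂(gaussianReal 0 1)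
      = Real.exp (-(Θ*c)) * (Real.exp ((Θ*b)^2/2)
          * (1 + erf ((Θ * b^2 - c) / (b * Real.sqrt 2))) / 2) := by
    rw [hv]
    rw [integral_const_mul, tail_Iic]
    have e2 : (s - (-(Θ*b)))/Real.sqrt 2 = (Θ * b^2 - c) / (b * Real.sqrt 2) := by
      have h2 : Real.sqrt 2 ≠ 0 := by positivity
      field_simp [hs]
      linear_combination hbs
    rw [e2, neg_sq]
  rw [hNum, hDen, hUint, hVint]
  set p := 1 + erf ((Θ * b^2 + c) / (b * Real.sqrt 2)) with hp
  set m := 1 + erf ((Θ * b^2 - c) / (b * Real.sqrt 2)) with hm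
  have hppos : 0 < p := one_add_erf_pos _
  have hmpos : 0 < m := one_add_erf_pos _
  have hFfun : Ffun c b Θ = p / m := rfl
  have hq : Real.exp (2 * Θ * c) = Real.exp (Θ*c) * Real.exp (Θ*c) := by
    rw [← Real.exp_add]; congr 1; ring
  rw [hFfun, hq, Real.exp_neg]
  have := alg_i (Real.exp (Θ*c)) (Real.exp ((Θ*b)^2/2)) p m
    (Real.exp_pos _) (Real.exp_pos _) hppos hmpos
  calc (Real.exp (Θ*c) * (Real.exp ((Θ*b)^2/2) * p / 2)
        - (Real.exp (Θ*c))⁻¹ * (Real.exp ((Θ*b)^2/2) * m / 2))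
      / (Real.exp (Θ*c) * (Real.exp ((Θ*b)^2/2) * p / 2)
        + (Real.exp (Θ*c))⁻¹ * (Real.exp ((Θ*b)^2/2) * m / 2))
      = (Real.exp (Θ*c) * Real.exp ((Θ*b)^2/2) * p / 2
        - (Real.exp (Θ*c))⁻¹ * Real.exp ((Θ*b)^2/2) * m / 2)
      / (Real.exp (Θ*c) * Real.exp ((Θ*b)^2/2) * p / 2
        + (Real.exp (Θ*c))⁻¹ * Real.exp ((Θ*b)^2/2) * m / 2) := by ring_nf
    _ = 1 - 2 / (1 + Real.exp (Θ*c) * Real.exp (Θ*c) * (p / m)) := this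

lemma integrable_of_bdd {f : ℝ → ℝ} (hf : Continuous f) {C : ℝ} (h : ∀ x, |f x| ≤ C) :
    Integrable f (gaussianReal 0 1) :=
  ⟨hf.aestronglyMeasurable, HasFiniteIntegral.of_bounded (C := C) (ae_of_all _ h)⟩

lemma gExp_const_one : gExp (fun _ => 1) = 1 := by
  rw [gExp, integral_const]
  simp

lemma part_ii_gen (X : ℝ → ℝ) (hc : Continuous X) (hp : ∀ j, 0 < X j) :
    (gExp (fun j => 1 - 2 / (1 + X j)) = 1 - 2 * gExp (fun j => 1 / (1 + X j)))
    ∧ 1 - gExp (fun j => (1 - 2 / (1 + X j))^2) = 4 * gExp (fun j => X j / (1 + X j)^2) := by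
  have h1X : ∀ j, (0:ℝ) < 1 + X j := fun j => by linarith [hp j]
  have hcont1 : Continuous fun j => 1 / (1 + X j) :=
    continuous_const.div (continuous_const.add hc) fun j => (h1X j).ne'
  have hInt1 : Integrable (fun j => 1 / (1 + X j)) (gaussianReal 0 1) := by
    refine integrable_of_bdd hcont1 (C := 1) fun x => ?_
    rw [abs_of_nonneg (div_nonneg zero_le_one (h1X x).le)]
    rw [div_le_one (h1X x)]
    linarith [hp x]
  have hcont2 : Continuous fun j => X j / (1 + X j)^2 :=
    hc.div ((continuous_const.add hc).pow 2) fun j => pow_ne_zero 2 (h1X j).ne'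
  have hInt2 : Integrable (fun j => X j / (1 + X j)^2) (gaussianReal 0 1) := by
    refine integrable_of_bdd hcont2 (C := 1) fun x => ?_
    rw [abs_of_nonneg (div_nonneg (hp x).le (sq_nonneg _))]
    rw [div_le_one (pow_pos (h1X x) 2)]
    nlinarith [hp x]
  constructor
  · have : (fun j => 1 - 2 / (1 + X j)) = fun j => 1 - 2 * (1 / (1 + X j)) := by
      funext j; ring
    rw [this, gExp, integral_sub (integrable_const 1) (hInt1.const_mul 2),
      integral_const_mul]
    simp [gExp]
  · have : (fun j => (1 - 2 / (1 + X j))^2) = fun j => 1 - 4 * (X j / (1 + X j)^2) := by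
      funext j
      have := (h1X j).ne'
      field_simp
      ring
    rw [this, gExp, integral_sub (integrable_const 1) (hInt2.const_mul 4),
      integral_const_mul]
    simp [gExp]

theorem stmt6 (c b Θ : ℝ) (hb : 0 < b) (hΘ : 0 < Θ)
    (mb γ : ℝ) (P : ℕ) (hγ : 0 < γ) (hP : 2 ≤ P) (Δqb : ℝ) (hΔ : 0 < Δqb)
    (A₁ A₂ A₃ : ℝ)
    (hA₁ : A₁ = ((P : ℝ)/2) * mb ^ (P - 1))
    (hA₂ : A₂ = Real.sqrt (γ * (P : ℝ) / 2))
    (hA₃ : A₃ = Real.sqrt (γ * (P : ℝ) * ((P : ℝ) - 1) * Δqb / 2)) :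
    -- (i)
    gExp (fun J => sgn (c + b * J) * Real.exp (Θ * |c + b * J|))
        / gExp (fun J => Real.exp (Θ * |c + b * J|))
      = 1 - 2 / (1 + Real.exp (2 * Θ * c) * Ffun c b Θ)
    -- (ii)
    ∧ gExp (fun j1 =>
        gExp (fun j2 => sgn (A₁ + A₂ * j1 + A₃ * j2) *
            Real.exp (Θ * |A₁ + A₂ * j1 + A₃ * j2|))
        / gExp (fun j2 => Real.exp (Θ * |A₁ + A₂ * j1 + A₃ * j2|)))
      = 1 - 2 * gExp (fun j1 =>
          1 / (1 + Real.exp (2 * Θ * (A₁ + A₂ * j1)) * Ffun (A₁ + A₂ * j1) A₃ Θ))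
    ∧ 1 - gExp (fun j1 =>
        (gExp (fun j2 => sgn (A₁ + A₂ * j1 + A₃ * j2) *
            Real.exp (Θ * |A₁ + A₂ * j1 + A₃ * j2|))
         / gExp (fun j2 => Real.exp (Θ * |A₁ + A₂ * j1 + A₃ * j2|))) ^ 2)
      = 4 * gExp (fun j1 =>
          Real.exp (2 * Θ * (A₁ + A₂ * j1)) * Ffun (A₁ + A₂ * j1) A₃ Θ
          / (1 + Real.exp (2 * Θ * (A₁ + A₂ * j1)) * Ffun (A₁ + A₂ * j1) A₃ Θ) ^ 2) := by
  have hA3pos : 0 < A₃ := by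
    rw [hA₃]
    apply Real.sqrt_pos.2
    have hP1 : (2:ℝ) ≤ (P:ℝ) := by exact_mod_cast hP
    have h1 : (0:ℝ) < γ * (P:ℝ) * ((P:ℝ) - 1) * Δqb :=
      mul_pos (mul_pos (mul_pos hγ (by linarith)) (by linarith)) hΔ
    linarith
  have hXcont : Continuous (fun j : ℝ =>
      Real.exp (2 * Θ * (A₁ + A₂ * j)) * Ffun (A₁ + A₂ * j) A₃ Θ) := by
    have haff : Continuous (fun j : ℝ => A₁ + A₂ * j) :=
      continuous_const.add (continuous_const.mul continuous_id)
    apply Continuous.mul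
    · exact Real.continuous_exp.comp (continuous_const.mul haff)
    · unfold Ffun
      apply Continuous.div
      · exact continuous_const.add
          (erf_continuous.comp ((continuous_const.add haff).div_const _))
      · exact continuous_const.add
          (erf_continuous.comp ((continuous_const.sub haff).div_const _))
      · exact fun j => (one_add_erf_pos _).ne'
  have hXpos : ∀ j : ℝ, 0 < Real.exp (2 * Θ * (A₁ + A₂ * j)) * Ffun (A₁ + A₂ * j) A₃ Θ :=
    fun j => mul_pos (Real.exp_pos _) (Ffun_pos _ _ _)
  obtain ⟨h1, h2⟩ := part_ii_gen _ hXcont hXpos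
  have hfun : (fun j1 =>
        gExp (fun j2 => sgn (A₁ + A₂ * j1 + A₃ * j2) *
            Real.exp (Θ * |A₁ + A₂ * j1 + A₃ * j2|))
        / gExp (fun j2 => Real.exp (Θ * |A₁ + A₂ * j1 + A₃ * j2|)))
      = fun j1 => 1 - 2 / (1 + Real.exp (2 * Θ * (A₁ + A₂ * j1)) * Ffun (A₁ + A₂ * j1) A₃ Θ) :=
    funext fun j1 => part_i (A₁ + A₂ * j1) A₃ Θ hA3pos
  have hfun2 : (fun j1 =>
        (gExp (fun j2 => sgn (A₁ + A₂ * j1 + A₃ * j2) *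
            Real.exp (Θ * |A₁ + A₂ * j1 + A₃ * j2|))
         / gExp (fun j2 => Real.exp (Θ * |A₁ + A₂ * j1 + A₃ * j2|))) ^ 2)
      = fun j1 => (1 - 2 / (1 + Real.exp (2 * Θ * (A₁ + A₂ * j1))
          * Ffun (A₁ + A₂ * j1) A₃ Θ)) ^ 2 :=
    funext fun j1 => by rw [part_i (A₁ + A₂ * j1) A₃ Θ hA3pos]
  refine ⟨part_i c b Θ hb, ?_, ?_⟩
  · rw [hfun]
    exact h1
  · rw [hfun2]
    exact h2
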